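/- Let A ∈ M(2,ℤ) with real eigenvalues ρ₁, ρ₂, |ρ₁| > |ρ₂|, and let κ = ρ₂/ρ₁ ∈ (-1,1) with κ < 0. Let w₁, w₂ be corresponding eigenvectors and write, in the basis (w₁,w₂), two lines D₁ = ℝ(1,α), D₂ = ℝ(1,-β) with α, β > 0. The cone C bounded by D₁ and D₂ (containing ℝw₁) satisfies A(C) ⊊ C if and only if |κ|α < β < |κ|⁻¹α. -/

import Mathlib

/-!
Write `A = ρ₁ • diag(1, κ)`. The scalar `ρ₁` multiplies the quadratic form cutting out `C` by
`ρ₁² > 0`, and `diag(1, κ)` sends the line of slope `s` to the line of slope `κs`. The nonzero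
points of `C` lie on the lines of slope in `[-β, α]` and its interior is the union of the lines
of slope in `(-β, α)`, so the condition is that `s ↦ κs` maps `[-β, α]` into `(-β, α)`; as
`κ < 0` reverses order, this only has to be checked at the endpoints: `-β < κα` and `-κβ < α`.
-/

open Set Filter Topology

def coneForm (α β : ℝ) (p : ℝ × ℝ) : ℝ := (p.2 - α * p.1) * (p.2 + β * p.1)

section coneForm

variable {α β : ℝ}

theorem coneForm_add_sub (α β x y t : ℝ) :
    coneForm α β (x, y + t) + coneForm α β (x, y - t) = 2 * coneForm α β (x, y) + 2 * t ^ 2 := by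
  simp only [coneForm]; ring

theorem continuous_coneForm (α β : ℝ) : Continuous (coneForm α β) := by
  unfold coneForm; fun_prop

/-- On the boundary lines, moving vertically by `±t` raises `coneForm` on average by `t²`
(`coneForm_add_sub`), so one of the two moves leaves the cone. -/
theorem interior_setOf_coneForm_nonpos (α β : ℝ) :
    interior {p | coneForm α β p ≤ 0} = {p | coneForm α β p < 0} := by
  refine Subset.antisymm (fun q hq => ?_)
    (interior_maximal (ofPred_subset_ofPred.mpr fun _ => le_of_lt)
      (isOpen_lt (continuous_coneForm α β) continuous_const))
  have hle : coneForm α β q ≤ 0 := (interior_subset hq : q ∈ {p | coneForm α β p ≤ 0})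
  refine lt_of_le_of_ne hle fun hzero => ?_
  have hshift (sign : ℝ) : Tendsto (fun t : ℝ => (q.1, q.2 + sign * t)) (𝓝[≠] 0) (𝓝 q) := by
    refine tendsto_nhdsWithin_of_tendsto_nhds (Continuous.tendsto' (by fun_prop) _ _ ?_)
    simp
  obtain ⟨t, ⟨hup, hdown⟩, ht : t ≠ 0⟩ :=
    (((hshift 1).eventually (mem_interior_iff_mem_nhds.mp hq)).and
      ((hshift (-1)).eventually (mem_interior_iff_mem_nhds.mp hq))
      |>.and self_mem_nhdsWithin).exists
  have hsum := coneForm_add_sub α β q.1 q.2 t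
  simp only [one_mul, neg_one_mul, ← sub_eq_add_neg] at hup hdown
  rw [hzero] at hsum
  have : 0 < t ^ 2 := by positivity
  linarith

theorem coneForm_eq_sq_mul_slope {x : ℝ} (hx : x ≠ 0) (y : ℝ) :
    coneForm α β (x, y) = x ^ 2 * coneForm α β (1, y / x) := by
  simp only [coneForm]; field_simp

theorem coneForm_mul_mul {ρ₁ : ℝ} (hρ₁ : ρ₁ ≠ 0) (ρ₂ x y : ℝ) :
    coneForm α β (ρ₁ * x, ρ₂ * y) = ρ₁ ^ 2 * coneForm α β (x, ρ₂ / ρ₁ * y) := by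
  simp only [coneForm]; field_simp

theorem fst_ne_zero_of_coneForm_nonpos {p : ℝ × ℝ} (hp : coneForm α β p ≤ 0) (hp0 : p ≠ 0) :
    p.1 ≠ 0 := by
  obtain ⟨x, y⟩ := p
  rintro (rfl : x = 0)
  have hy : y = 0 := by
    simp only [coneForm, mul_zero, sub_zero, add_zero] at hp
    nlinarith
  exact hp0 (by simp [hy])

theorem coneForm_vertical_scaling_neg_iff (κ : ℝ) :
    (∀ p : ℝ × ℝ, coneForm α β p ≤ 0 → p ≠ 0 → coneForm α β (p.1, κ * p.2) < 0) ↔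
      ∀ s, coneForm α β (1, s) ≤ 0 → coneForm α β (1, κ * s) < 0 := by
  refine ⟨fun h s hs => by simpa using h (1, s) hs (by simp), fun h p hp hp0 => ?_⟩
  have hx := fst_ne_zero_of_coneForm_nonpos hp hp0
  rw [coneForm_eq_sq_mul_slope hx, mul_div_assoc]
  rw [coneForm_eq_sq_mul_slope hx] at hp
  exact mul_neg_of_pos_of_neg (by positivity) (h _ (nonpos_of_mul_nonpos_right hp (by positivity)))

theorem image_diagonal_subset_setOf_coneForm_neg_iff {ρ₁ : ℝ} (hρ₁ : ρ₁ ≠ 0) (ρ₂ : ℝ) :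
    (fun p : ℝ × ℝ => (ρ₁ * p.1, ρ₂ * p.2)) '' ({p | coneForm α β p ≤ 0} \ {0}) ⊆
        {p | coneForm α β p < 0} ↔
      ∀ s, coneForm α β (1, s) ≤ 0 → coneForm α β (1, ρ₂ / ρ₁ * s) < 0 := by
  have hsq : 0 < ρ₁ ^ 2 := by positivity
  rw [image_subset_iff, ← coneForm_vertical_scaling_neg_iff]
  refine forall_congr' fun p => ?_
  simp only [Set.mem_sdiff, mem_preimage, mem_singleton_iff, mem_ofPred_eq, coneForm_mul_mul hρ₁,
    and_imp, mul_neg_iff, hsq, true_and, not_lt_of_gt hsq, false_and, or_false]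

theorem coneForm_one_nonpos_iff_mem_Icc (hαβ : -β ≤ α) (s : ℝ) :
    coneForm α β (1, s) ≤ 0 ↔ s ∈ Icc (-β) α := by
  simp only [coneForm, mul_one, mem_Icc]
  constructor
  · intro h; constructor <;> nlinarith
  · rintro ⟨h₁, h₂⟩; nlinarith

theorem coneForm_one_neg_iff_mem_Ioo (hαβ : -β ≤ α) (s : ℝ) :
    coneForm α β (1, s) < 0 ↔ s ∈ Ioo (-β) α := by
  simp only [coneForm, mul_one, mem_Ioo]
  constructor
  · intro h; constructor <;> nlinarith
  · rintro ⟨h₁, h₂⟩; nlinarith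

end coneForm

theorem mapsTo_mul_Icc_Ioo_iff_of_neg {κ a b : ℝ} (hκ : κ < 0) (hab : a ≤ b) :
    MapsTo (κ * ·) (Icc a b) (Ioo a b) ↔ a < κ * b ∧ κ * a < b := by
  refine ⟨fun h => ⟨(h (right_mem_Icc.mpr hab)).1, (h (left_mem_Icc.mpr hab)).2⟩, ?_⟩
  rintro ⟨hb, ha⟩ s ⟨has, hsb⟩
  constructor <;> nlinarith

theorem cone_strictly_invariant_iff_general (ρ₁ ρ₂ α β : ℝ)
    (hκ : ρ₂ / ρ₁ < 0)
    (hα : 0 < α) (hβ : 0 < β) :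
    ((fun p : ℝ × ℝ => (ρ₁ * p.1, ρ₂ * p.2)) ''
        ({p : ℝ × ℝ | (p.2 - α * p.1) * (p.2 + β * p.1) ≤ 0} \ {0}) ⊆
      interior {p : ℝ × ℝ | (p.2 - α * p.1) * (p.2 + β * p.1) ≤ 0}) ↔
    (|ρ₂ / ρ₁| * α < β ∧ β < |ρ₂ / ρ₁|⁻¹ * α) := by
  have hρ₁ : ρ₁ ≠ 0 := by rintro rfl; simp at hκ
  have hαβ : -β ≤ α := by linarith
  change (fun p : ℝ × ℝ => (ρ₁ * p.1, ρ₂ * p.2)) '' ({p | coneForm α β p ≤ 0} \ {0}) ⊆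
    interior {p | coneForm α β p ≤ 0} ↔ _
  rw [interior_setOf_coneForm_nonpos, image_diagonal_subset_setOf_coneForm_neg_iff hρ₁]
  simp only [coneForm_one_nonpos_iff_mem_Icc hαβ, coneForm_one_neg_iff_mem_Ioo hαβ]
  rw [← MapsTo, mapsTo_mul_Icc_Ioo_iff_of_neg hκ hαβ, abs_of_neg hκ,
    lt_inv_mul_iff₀ (neg_pos.mpr hκ)]
  constructor <;> rintro ⟨h₁, h₂⟩ <;> constructor <;> linarith

/-- Eigenbasis coordinates: `A` acts by `(x,y) ↦ (ρ₁x, ρ₂y)` with `|ρ₁| > |ρ₂|`,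
`κ = ρ₂/ρ₁ ∈ (-1,0)`.  The cone `C` bounded by the lines `D₁ = ℝ(1,α)` and
`D₂ = ℝ(1,-β)` (with `α, β > 0`) containing `ℝw₁` is mapped strictly into itself
(the nonzero part of `C` goes into the interior of `C`) if and only if
`|κ|α < β < |κ|⁻¹α`. -/
theorem cone_strictly_invariant_iff (ρ₁ ρ₂ α β : ℝ)
    (h : |ρ₂| < |ρ₁|) (hρ₂ : ρ₂ ≠ 0) (hκ : ρ₂ / ρ₁ < 0)
    (hα : 0 < α) (hβ : 0 < β) :
    ((fun p : ℝ × ℝ => (ρ₁ * p.1, ρ₂ * p.2)) ''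
        ({p : ℝ × ℝ | (p.2 - α * p.1) * (p.2 + β * p.1) ≤ 0} \ {0}) ⊆
      interior {p : ℝ × ℝ | (p.2 - α * p.1) * (p.2 + β * p.1) ≤ 0}) ↔
    (|ρ₂ / ρ₁| * α < β ∧ β < |ρ₂ / ρ₁|⁻¹ * α) :=
  cone_strictly_invariant_iff_general ρ₁ ρ₂ α β hκ hα hβ
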